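/- Let f be holomorphic on Ω(c,C)^m with asymptotic expansion a, and let k ∈ {0,…,m}. Then the following are equivalent: (1) for every α ∈ supp a and every i ∈ {k+1,…,m}, the exponent αᵢ is a natural number; (2) for every i ∈ {k+1,…,m} and every z ∈ Ω(c,C)^m such that z + 2π√−1·eᵢ ∈ Ω(c,C)^m (where eᵢ is the i-th standard basis vector of ℂ^m), one has f(z + 2π√−1·eᵢ) = f(z). -/

import Mathlib

/-!
Translating by a purely imaginary vector `p` multiplies the monomial `exp⟨α,z⟩` by `exp⟨α,p⟩`,
so `f (z + p) - f z` has the expansion `∑ a α (exp⟨α,p⟩ - 1) exp⟨α,z⟩`.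

If all these coefficients vanish, then along a diagonal line `t ↦ z₀ + t` the difference
`f (z₀ + t + p) - f (z₀ + t)` is bounded and flat (`O(e^{νt})` for every `ν`) on a standard
quadratic domain. Composed with the map `w ↦ τ - w - 4C√(w+1)` of the right half-plane into that
domain it decays superexponentially along the real axis, so it vanishes by Phragmén–Lindelöf, and
the identity theorem carries this back to `t = 0`.

Conversely, if `f` is `p`-invariant, restrict to the real curve `z = t • w` with weights
`w ∈ (1 - η, 1)^m` chosen off finitely many hyperplanes, so that the exponents `⟨α,w⟩` of a partial
sum are pairwise distinct. An exponential sum that is `O(e^{tE})` as `t → -∞` has no terms with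
exponent below `E`, hence `exp⟨α,p⟩ = 1` on the support. For `p = 2πi eᵢ` this says `αᵢ ∈ ℕ`.
-/

noncomputable section
open scoped Classical

/-- Logarithmic model of a standard quadratic domain:
`Ω(c,C) = {z : Re z < log c - C·√|Im z|}`. -/
def SQD (c C : ℝ) : Set ℂ := {z : ℂ | z.re < Real.log c - C * Real.sqrt |z.im|}

/-- The cartesian power `Ω(c,C)^m`. -/
def QDom (c C : ℝ) (m : ℕ) : Set (Fin m → ℂ) := {z | ∀ i, z i ∈ SQD c C}

/-- Open disc `D_R` of radius `R` centred at `0`. -/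
def Disc (R : ℝ) : Set ℂ := {w : ℂ | ‖w‖ < R}

/-- Polydisc `D_R^n`. -/
def PDisc (R : ℝ) (n : ℕ) : Set (Fin n → ℂ) := {y | ∀ j, y j ∈ Disc R}

/-- The exponential monomial `exp⟨α,z⟩`. -/
def expMono {m : ℕ} (α : Fin m → ℝ) (z : Fin m → ℂ) : ℂ :=
  Complex.exp (∑ i, (α i : ℂ) * z i)

/-- Euclidean norm of `E(z) = (exp (Re z₁), …, exp (Re z_m))`. -/
def eNorm {m : ℕ} (z : Fin m → ℂ) : ℝ :=
  Real.sqrt (∑ i, Real.exp ((z i).re) ^ 2)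

/-- A generalized power series with natural support: nonnegative exponents, and in each
coordinate the set of exponents below any bound is finite. -/
def NaturalSeries {m : ℕ} (a : (Fin m → ℝ) → ℂ) : Prop :=
  (∀ α, a α ≠ 0 → ∀ i, 0 ≤ α i) ∧
  ∀ i : Fin m, ∀ R : ℝ, 0 < R → {r : ℝ | (∃ α, a α ≠ 0 ∧ α i = r) ∧ r ≤ R}.Finite

/-- `f` has asymptotic expansion `a` on `Ω(c,C)^m`: for every `ν > 0` there is a smaller
standard quadratic domain on which `f` minus the partial sum of weight `≤ ν` is
`o(‖E(z)‖^ν)` as `‖E(z)‖ → 0`. -/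
def HasAsymExp {m : ℕ} (c C : ℝ) (f : (Fin m → ℂ) → ℂ) (a : (Fin m → ℝ) → ℂ) : Prop :=
  NaturalSeries a ∧
  ∀ ν : ℝ, 0 < ν → ∃ c' C' : ℝ, 0 < c' ∧ 0 < C' ∧ SQD c' C' ⊆ SQD c C ∧
    ∃ F : Finset (Fin m → ℝ),
      (∀ α, α ∈ F ↔ a α ≠ 0 ∧ ∑ i, α i ≤ ν) ∧
      ∀ ε : ℝ, 0 < ε → ∃ δ : ℝ, 0 < δ ∧
        ∀ z ∈ QDom c' C' m, eNorm z < δ →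
          ‖f z - ∑ α ∈ F, a α * expMono α z‖ ≤ ε * eNorm z ^ ν

open Filter Topology Asymptotics Set
open scoped Pointwise

lemma Real.sqrt_abs_add_le (x y : ℝ) : √|x + y| ≤ √|x| + √|y| := by
  rw [Real.sqrt_le_iff]
  refine ⟨by positivity, ?_⟩
  nlinarith [abs_add_le x y, Real.sq_sqrt (abs_nonneg x), Real.sq_sqrt (abs_nonneg y),
    mul_nonneg (Real.sqrt_nonneg |x|) (Real.sqrt_nonneg |y|)]

lemma continuous_log_sub_mul_sqrt_abs (c C : ℝ) : Continuous fun y : ℝ => Real.log c - C * √|y| :=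
  continuous_const.sub (continuous_const.mul (Real.continuous_sqrt.comp continuous_abs))

lemma isOpen_SQD (c C : ℝ) : IsOpen (SQD c C) :=
  isOpen_lt Complex.continuous_re
    ((continuous_log_sub_mul_sqrt_abs c C).comp Complex.continuous_im)

lemma isPreconnected_setOf_re_lt {Ψ : ℝ → ℝ} (hΨ : Continuous Ψ) :
    IsPreconnected {t : ℂ | t.re < Ψ t.im} := by
  have hshear : (fun s : ℂ => s + (Ψ s.im : ℂ)) '' {s | s.re < 0} = {t | t.re < Ψ t.im} := by
    ext t
    refine ⟨?_, fun ht => ⟨t - (Ψ t.im : ℂ), ?_, ?_⟩⟩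
    · rintro ⟨s, hs, rfl⟩
      simp only [mem_ofPred_eq, Complex.add_re, Complex.ofReal_re, Complex.add_im,
        Complex.ofReal_im, add_zero] at hs ⊢
      linarith
    · simp only [mem_ofPred_eq, Complex.sub_re, Complex.ofReal_re] at ht ⊢
      linarith
    · simp
  rw [← hshear]
  refine (convex_halfSpace_re_lt 0).isPreconnected.image _ (Continuous.continuousOn ?_)
  exact continuous_id.add (Complex.continuous_ofReal.comp (hΨ.comp Complex.continuous_im))

lemma isPreconnected_SQD (c C : ℝ) : IsPreconnected (SQD c C) :=
  isPreconnected_setOf_re_lt (continuous_log_sub_mul_sqrt_abs c C)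

lemma isOpen_QDom (c C : ℝ) (m : ℕ) : IsOpen (QDom c C m) := by
  convert isOpen_set_pi finite_univ fun (_ : Fin m) _ => isOpen_SQD c C
  ext
  simp [QDom]

lemma QDom_mono {c C c' C' : ℝ} (h : SQD c' C' ⊆ SQD c C) (m : ℕ) :
    QDom c' C' m ⊆ QDom c C m :=
  fun _ hz j => h (hz j)

section Monomials

variable {m : ℕ}

lemma eNorm_nonneg (z : Fin m → ℂ) : 0 ≤ eNorm z := Real.sqrt_nonneg _

lemma eNorm_add_of_re_eq_zero {p : Fin m → ℂ} (hp : ∀ j, (p j).re = 0) (z : Fin m → ℂ) :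
    eNorm (z + p) = eNorm z := by
  simp [eNorm, hp]

lemma eNorm_const_add (t : ℂ) (z : Fin m → ℂ) :
    eNorm ((fun _ => t) + z) = Real.exp t.re * eNorm z := by
  rw [eNorm, eNorm, ← Real.sqrt_sq (Real.exp_pos t.re).le, ← Real.sqrt_mul (by positivity),
    Finset.mul_sum]
  congr 1
  refine Finset.sum_congr rfl fun j _ => ?_
  simp only [Pi.add_apply, Complex.add_re, Real.exp_add]
  ring

lemma eNorm_le_of_re_le {z : Fin m → ℂ} {s : ℝ} (h : ∀ j, (z j).re ≤ s) :
    eNorm z ≤ √m * Real.exp s := by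
  rw [← Real.sqrt_sq (Real.exp_pos s).le, ← Real.sqrt_mul (Nat.cast_nonneg m)]
  refine Real.sqrt_le_sqrt ?_
  calc ∑ j, Real.exp (z j).re ^ 2 ≤ ∑ _j : Fin m, Real.exp s ^ 2 :=
        Finset.sum_le_sum fun j _ => pow_le_pow_left₀ (Real.exp_pos _).le
          (Real.exp_le_exp.2 (h j)) 2
    _ = m * Real.exp s ^ 2 := by simp

lemma eNorm_ofReal_mul_le {w : Fin m → ℝ} {s t : ℝ} (hw : ∀ j, s ≤ w j) (ht : t ≤ 0) :
    eNorm (fun j => ((w j * t : ℝ) : ℂ)) ≤ √m * Real.exp (s * t) :=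
  eNorm_le_of_re_le fun j => by simpa using mul_le_mul_of_nonpos_right (hw j) ht

lemma re_lt_zero_of_eNorm_lt_one {z : Fin m → ℂ} (hz : eNorm z < 1) (j : Fin m) :
    (z j).re < 0 := by
  have hj : Real.exp (z j).re ≤ eNorm z :=
    Real.le_sqrt_of_sq_le (Finset.single_le_sum (fun i _ => sq_nonneg (Real.exp (z i).re))
      (Finset.mem_univ j))
  exact Real.exp_lt_one_iff.1 (hj.trans_lt hz)

lemma expMono_add (α : Fin m → ℝ) (z w : Fin m → ℂ) :
    expMono α (z + w) = expMono α z * expMono α w := by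
  simp only [expMono, Pi.add_apply, mul_add, Finset.sum_add_distrib, Complex.exp_add]

lemma norm_expMono (α : Fin m → ℝ) (z : Fin m → ℂ) :
    ‖expMono α z‖ = Real.exp (∑ j, α j * (z j).re) := by
  simp [expMono, Complex.norm_exp, Complex.re_sum]

lemma norm_expMono_le_one {α : Fin m → ℝ} {z : Fin m → ℂ} (hα : ∀ j, 0 ≤ α j)
    (hz : ∀ j, (z j).re ≤ 0) : ‖expMono α z‖ ≤ 1 := by
  rw [norm_expMono, Real.exp_le_one_iff]
  exact Finset.sum_nonpos fun j _ => mul_nonpos_of_nonneg_of_nonpos (hα j) (hz j)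

lemma expMono_ofReal_mul (α w : Fin m → ℝ) (t : ℝ) :
    expMono α (fun j => ((w j * t : ℝ) : ℂ)) = Real.exp (t * α ⬝ᵥ w) := by
  rw [expMono, Complex.ofReal_exp, dotProduct, Finset.mul_sum]
  push_cast
  congr 1
  exact Finset.sum_congr rfl fun j _ => by ring

lemma expMono_single (α : Fin m → ℝ) (i : Fin m) (w : ℂ) :
    expMono α (Pi.single i w) = Complex.exp (α i * w) := by
  simp [expMono, Pi.single_apply]

lemma exists_nat_eq_iff_exp_eq_one {r : ℝ} (hr : 0 ≤ r) :
    (∃ q : ℕ, r = q) ↔ Complex.exp (r * (((2 * Real.pi : ℝ) : ℂ) * Complex.I)) = 1 := by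
  rw [Complex.exp_eq_one_iff]
  constructor
  · rintro ⟨q, rfl⟩
    exact ⟨q, by push_cast; ring⟩
  · rintro ⟨n, hn⟩
    have hrn : r = n := by
      have h2πI : ((2 * Real.pi : ℝ) : ℂ) * Complex.I ≠ 0 := by simp [Real.pi_ne_zero]
      have h : (r : ℂ) * (((2 * Real.pi : ℝ) : ℂ) * Complex.I) =
          (n : ℂ) * (((2 * Real.pi : ℝ) : ℂ) * Complex.I) := hn.trans (by push_cast; ring)
      exact_mod_cast mul_right_cancel₀ h2πI h
    lift n to ℕ using (by exact_mod_cast hrn ▸ hr)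
    exact ⟨n, by exact_mod_cast hrn⟩

end Monomials

section QuadraticDomains

variable {m : ℕ}

lemma eventually_add_mem_QDom (c C : ℝ) {u : ℝ → Fin m → ℝ}
    (hu : ∀ j, Tendsto (fun t => u t j) atBot atBot) (z : Fin m → ℂ) :
    ∀ᶠ t in atBot, (fun j => (u t j : ℂ)) + z ∈ QDom c C m := by
  refine eventually_all.2 fun j => ?_
  filter_upwards [(hu j).eventually
    (eventually_lt_atBot (Real.log c - C * √|(z j).im| - (z j).re))] with t ht
  simp only [SQD, Pi.add_apply, mem_ofPred_eq, Complex.add_re, Complex.ofReal_re,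
    Complex.add_im, Complex.ofReal_im, zero_add]
  linarith

lemma const_add_ofReal_add_mem_QDom {c C : ℝ} {t : ℂ} {z : Fin m → ℂ}
    (h : (fun _ => t) + z ∈ QDom c C m) {s : ℝ} (hs : s ≤ 0) :
    (fun _ => t + (s : ℂ)) + z ∈ QDom c C m := by
  intro j
  have := h j
  simp only [SQD, mem_ofPred_eq, Pi.add_apply, Complex.add_re, Complex.ofReal_re,
    Complex.add_im, Complex.ofReal_im, add_zero] at this ⊢
  linarith

lemma eventually_forall_SQD_const_add_mem_QDom (c : ℝ) {C : ℝ} (hC : 0 ≤ C) (z : Fin m → ℂ)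
    {δ : ℝ} (hδ : 0 < δ) :
    ∀ᶠ L in atBot, ∀ t ∈ SQD (Real.exp L) C,
      (fun _ => t) + z ∈ QDom c C m ∧ eNorm ((fun _ => t) + z) < δ := by
  obtain ⟨L₁, hL₁⟩ := Finite.bddBelow_range fun j => Real.log c - C * √|(z j).im| - (z j).re
  obtain ⟨L₂, hL₂⟩ := eventually_atBot.1 <| (Real.tendsto_exp_atBot.mul_const (eNorm z)).eventually
    (gt_mem_nhds (by simpa using hδ))
  refine eventually_atBot.2 ⟨min L₁ L₂, fun L hL t ht => ⟨fun j => ?_, ?_⟩⟩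
  · have hLj : L₁ ≤ Real.log c - C * √|(z j).im| - (z j).re := hL₁ ⟨j, rfl⟩
    have hsqrt := mul_le_mul_of_nonneg_left (Real.sqrt_abs_add_le t.im (z j).im) hC
    simp only [SQD, mem_ofPred_eq, Real.log_exp] at ht
    simp only [SQD, Pi.add_apply, mem_ofPred_eq, Complex.add_re, Complex.add_im]
    linarith [min_le_left L₁ L₂]
  · have hre : t.re ≤ L₂ := by
      simp only [SQD, mem_ofPred_eq, Real.log_exp] at ht
      linarith [min_le_right L₁ L₂, mul_nonneg hC (Real.sqrt_nonneg |t.im|)]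
    rw [eNorm_const_add]
    exact hL₂ t.re hre

end QuadraticDomains

theorem eq_zero_of_isBigO_sum_exp {ι : Type*} {A : Finset ι} {e : ι → ℝ} (he : InjOn e A)
    {c : ι → ℂ} {E : ℝ}
    (h : (fun t : ℝ => ∑ b ∈ A, c b * Real.exp (t * e b)) =O[atBot] fun t => Real.exp (t * E))
    {a : ι} (ha : a ∈ A) (hlt : e a < E) : c a = 0 := by
  by_contra hca
  set S := A.filter fun b => c b ≠ 0
  obtain ⟨b₀, hb₀S, hmin⟩ := S.exists_min_image e ⟨a, Finset.mem_filter.2 ⟨ha, hca⟩⟩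
  obtain ⟨hb₀A, hcb₀⟩ := Finset.mem_filter.1 hb₀S
  -- After division by `e^{t e b₀}`, `b₀` the lowest surviving exponent, the sum tends to `c b₀`
  -- while the bound becomes `O(e^{t (E - e b₀)}) → 0`.
  have hrewrite : ∀ t : ℝ, (Real.exp (-(t * e b₀)) : ℂ) * ∑ b ∈ A, c b * Real.exp (t * e b) =
      ∑ b ∈ S, c b * Real.exp (t * (e b - e b₀)) := by
    intro t
    rw [← Finset.sum_filter_of_ne fun b _ hb => left_ne_zero_of_mul hb, Finset.mul_sum]
    refine Finset.sum_congr rfl fun b _ => ?_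
    rw [mul_left_comm, ← Complex.ofReal_mul, ← Real.exp_add]
    ring_nf
  have hlim : Tendsto (fun t : ℝ => ∑ b ∈ S, c b * Real.exp (t * (e b - e b₀))) atBot
      (𝓝 (∑ b ∈ S, if b = b₀ then c b₀ else 0)) := by
    refine tendsto_finsetSum _ fun b hb => ?_
    split_ifs with hbb₀
    · simp [hbb₀]
    have hpos : 0 < e b - e b₀ := sub_pos.2 <| (hmin b hb).lt_of_ne fun h =>
      hbb₀ (he (Finset.mem_filter.1 hb).1 hb₀A h.symm)
    simpa using ((Complex.continuous_ofReal.tendsto 0).comp <| Real.tendsto_exp_atBot.comp <|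
      tendsto_id.atBot_mul_const hpos).const_mul (c b)
  rw [Finset.sum_ite_eq' S b₀, if_pos hb₀S] at hlim
  have hdecay : Tendsto (fun t : ℝ => Real.exp (-(t * e b₀)) * Real.exp (t * E)) atBot (𝓝 0) := by
    simp_rw [← Real.exp_add, show ∀ t : ℝ, -(t * e b₀) + t * E = t * (E - e b₀) by intro; ring]
    exact Real.tendsto_exp_atBot.comp (tendsto_id.atBot_mul_const (sub_pos.2 <|
      (hmin a (Finset.mem_filter.2 ⟨ha, hca⟩)).trans_lt hlt))
  have hweight : (fun t : ℝ => (Real.exp (-(t * e b₀)) : ℂ)) =O[atBot]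
      fun t => Real.exp (-(t * e b₀)) :=
    IsBigO.of_bound 1 <| Eventually.of_forall fun t => by
      simp only [one_mul, Complex.norm_real, le_refl]
  have hzero := ((hweight.mul h).trans_tendsto hdecay).congr hrewrite
  exact hcb₀ (tendsto_nhds_unique hlim hzero)

open MeasureTheory in
theorem exists_mem_Ioo_injOn_dotProduct {ι : Type*} [Fintype ι] (F : Finset (ι → ℝ)) {a b : ℝ}
    (hab : a < b) : ∃ w : ι → ℝ, (∀ j, w j ∈ Ioo a b) ∧ InjOn (fun α => α ⬝ᵥ w) F := by
  let P := (F ×ˢ F).filter fun αβ => αβ.1 ≠ αβ.2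
  have hker : ∀ αβ ∈ P, LinearMap.ker (dotProductBilin ℝ ℝ (αβ.1 - αβ.2)) ≠ ⊤ := by
    intro αβ hαβ htop
    refine (Finset.mem_filter.1 hαβ).2 (sub_eq_zero.1 <| dotProduct_self_eq_zero.1 ?_)
    exact LinearMap.congr_fun (LinearMap.ker_eq_top.1 htop) (αβ.1 - αβ.2)
  have hnull : volume (⋃ αβ ∈ P, (LinearMap.ker (dotProductBilin ℝ ℝ (αβ.1 - αβ.2)) :
      Set (ι → ℝ))) = 0 :=
    (measure_biUnion_null_iff P.countable_toSet).2 fun αβ hαβ =>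
      Measure.addHaar_submodule _ _ (hker αβ hαβ)
  have hbox : 0 < volume (univ.pi fun _ : ι => Ioo a b) :=
    (isOpen_set_pi finite_univ fun _ _ => isOpen_Ioo).measure_pos _
      ⟨fun _ => (a + b) / 2, fun _ _ => ⟨by linarith, by linarith⟩⟩
  obtain ⟨w, hw, hwP⟩ := nonempty_of_measure_ne_zero ((measure_sdiff_null hnull).trans_ne hbox.ne')
  refine ⟨w, fun j => hw j (mem_univ j), fun α hα β hβ hαβ => ?_⟩
  by_contra hne
  refine hwP (mem_biUnion (x := (α, β))
    (Finset.mem_filter.2 ⟨Finset.mem_product.2 ⟨hα, hβ⟩, hne⟩) ?_)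
  simpa [sub_dotProduct, sub_eq_zero] using hαβ

/- With `X = √(‖w + 1‖ / 2)` one has `Re √(w + 1) ≥ X ≥ |Im √(w + 1)|`, so the term `4C√(w + 1)`
pushes the image to the left faster than `C√|Im|` grows; `-C² - 1` absorbs the AM–GM error. -/
def halfPlaneToSQD (c C : ℝ) (w : ℂ) : ℂ :=
  ((Real.log c - C ^ 2 - 1 : ℝ) : ℂ) - w - ((4 * C : ℝ) : ℂ) * Complex.sqrt (w + 1)

lemma halfPlaneToSQD_mem (c : ℝ) {C : ℝ} (hC : 0 ≤ C) {w : ℂ} (hw : 0 ≤ w.re) :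
    halfPlaneToSQD c C w ∈ SQD c C := by
  set v := w + 1
  set s := Complex.sqrt v
  set X := √(‖v‖ / 2)
  set q := √(C * X)
  have hvre : v.re = w.re + 1 := by simp [v]
  have hre : X ≤ s.re := by
    rw [show s = v ^ (2⁻¹ : ℂ) from rfl, Complex.cpow_inv_two_re]
    exact Real.sqrt_le_sqrt (by linarith)
  have him : |s.im| ≤ X := by
    rw [show s = v ^ (2⁻¹ : ℂ) from rfl, Complex.abs_cpow_inv_two_im]
    exact Real.sqrt_le_sqrt (by linarith)
  have hX2 : X ^ 2 = ‖v‖ / 2 := Real.sq_sqrt (by positivity)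
  have hq2 : q ^ 2 = C * X := Real.sq_sqrt (by positivity)
  have hwim : |w.im| ≤ ‖v‖ := by simpa [v] using Complex.abs_im_le_norm v
  have hmap_re : (halfPlaneToSQD c C w).re = Real.log c - C ^ 2 - 1 - w.re - 4 * C * s.re := by
    simp only [halfPlaneToSQD, Complex.sub_re, Complex.mul_re, Complex.ofReal_re,
      Complex.ofReal_im, zero_mul, sub_zero]
    rfl
  have hmap_im : |(halfPlaneToSQD c C w).im| ≤ 2 * X ^ 2 + 4 * C * X := by
    have : (halfPlaneToSQD c C w).im = -w.im - 4 * C * s.im := by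
      simp only [halfPlaneToSQD, Complex.sub_im, Complex.mul_im, Complex.ofReal_re,
        Complex.ofReal_im, zero_mul, add_zero, zero_sub]
      rfl
    rw [this]
    calc |-w.im - 4 * C * s.im| ≤ |w.im| + 4 * C * |s.im| := by
          simpa [abs_mul, abs_of_nonneg hC] using abs_sub (-w.im) (4 * C * s.im)
      _ ≤ 2 * X ^ 2 + 4 * C * X := by gcongr; linarith
  have hsqrt : √|(halfPlaneToSQD c C w).im| ≤ 2 * X + 2 * q := by
    rw [Real.sqrt_le_iff]
    refine ⟨by positivity, ?_⟩
    nlinarith [mul_nonneg (Real.sqrt_nonneg (‖v‖ / 2)) (Real.sqrt_nonneg (C * X))]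
  have hamgm : 2 * C * q ≤ C ^ 2 + q ^ 2 := by nlinarith [sq_nonneg (C - q)]
  have hX0 : 0 ≤ X := Real.sqrt_nonneg _
  show (halfPlaneToSQD c C w).re < Real.log c - C * √|(halfPlaneToSQD c C w).im|
  nlinarith [mul_le_mul_of_nonneg_left hsqrt hC, mul_le_mul_of_nonneg_left hre hC,
    mul_nonneg hC hX0]

lemma differentiableAt_halfPlaneToSQD (c C : ℝ) {w : ℂ} (hw : 0 ≤ w.re) :
    DifferentiableAt ℂ (halfPlaneToSQD c C) w := by
  have hslit : w + 1 ∈ Complex.slitPlane :=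
    Complex.mem_slitPlane_iff.2 (Or.inl (by simp; linarith))
  exact ((differentiableAt_const _).sub differentiableAt_id).sub
    (((differentiableAt_id.add_const 1).cpow_const hslit).const_mul _)

lemma halfPlaneToSQD_ofReal (c C : ℝ) {x : ℝ} (hx : 0 ≤ x) :
    halfPlaneToSQD c C x = ((Real.log c - C ^ 2 - 1 - x - 4 * C * √(x + 1) : ℝ) : ℂ) := by
  have hsqrt : Complex.sqrt ((x : ℂ) + 1) = ((√(x + 1) : ℝ) : ℂ) := by
    rw [← Complex.ofReal_one, ← Complex.ofReal_add,
      Complex.sqrt_of_nonneg (Complex.zero_le_real.2 (by linarith)), Complex.ofReal_re]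
  rw [halfPlaneToSQD, hsqrt]
  push_cast
  ring

lemma superpolynomialDecay_comp_halfPlaneToSQD (c : ℝ) {C : ℝ} (hC : 0 ≤ C) {g : ℂ → ℂ}
    (hflat : ∀ ν > 0, (fun x : ℝ => g x) =O[atBot] fun x => Real.exp (ν * x)) :
    SuperpolynomialDecay atTop Real.exp fun x : ℝ => ‖g (halfPlaneToSQD c C x)‖ := by
  intro n
  set τ := Real.log c - C ^ 2 - 1
  set y : ℝ → ℝ := fun x => τ - x - 4 * C * √(x + 1)
  have hyle : ∀ x, y x ≤ τ - x := fun x => by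
    have := mul_nonneg (mul_nonneg zero_le_four hC) (Real.sqrt_nonneg (x + 1))
    simp only [y]
    linarith
  have hy : Tendsto y atTop atBot :=
    tendsto_atBot_mono hyle (tendsto_atBot_add_const_left _ τ tendsto_neg_atTop_atBot)
  obtain ⟨K, hK0, hK⟩ := (hflat (n + 1) (by positivity)).exists_pos
  have hbound := (hK.comp_tendsto hy).bound
  have hdecay : Tendsto (fun x : ℝ => K * Real.exp ((n + 1) * τ) * Real.exp (-x)) atTop (𝓝 0) := by
    simpa using (Real.tendsto_exp_atBot.comp tendsto_neg_atTop_atBot).const_mul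
      (K * Real.exp ((n + 1) * τ))
  refine squeeze_zero' (Eventually.of_forall fun x => by positivity) ?_ hdecay
  filter_upwards [hbound, eventually_ge_atTop 0] with x hx hx0
  simp only [Function.comp_apply] at hx
  rw [halfPlaneToSQD_ofReal c C hx0]
  calc Real.exp x ^ n * ‖g (y x)‖
      ≤ Real.exp x ^ n * (K * Real.exp ((n + 1) * (τ - x))) := by
        refine mul_le_mul_of_nonneg_left (hx.trans ?_) (by positivity)
        rw [Real.norm_of_nonneg (Real.exp_pos _).le]
        gcongr
        exact hyle x
    _ = K * Real.exp ((n + 1) * τ) * Real.exp (-x) := by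
        rw [← Real.exp_nat_mul]
        simp only [mul_left_comm _ K, ← Real.exp_add, mul_assoc]
        ring_nf

theorem eqOn_zero_of_isBigO_exp {c C : ℝ} (hC : 0 ≤ C) {g : ℂ → ℂ}
    (hg : DifferentiableOn ℂ g (SQD c C)) {M : ℝ} (hM : ∀ t ∈ SQD c C, ‖g t‖ ≤ M)
    (hflat : ∀ ν > 0, (fun x : ℝ => g x) =O[atBot] fun x => Real.exp (ν * x)) :
    EqOn g 0 (SQD c C) := by
  have hmem : ∀ w : ℂ, 0 ≤ w.re → halfPlaneToSQD c C w ∈ SQD c C :=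
    fun w hw => halfPlaneToSQD_mem c hC hw
  have hdiff : DiffContOnCl ℂ (g ∘ halfPlaneToSQD c C) {w | 0 < w.re} := by
    refine DifferentiableOn.diffContOnCl fun w hw => ?_
    rw [Complex.closure_setOfPred_lt_re] at hw
    exact ((hg.differentiableAt ((isOpen_SQD c C).mem_nhds (hmem w hw))).comp w
      (differentiableAt_halfPlaneToSQD c C hw)).differentiableWithinAt
  have hbdd : (g ∘ halfPlaneToSQD c C) =O[Bornology.cobounded ℂ ⊓ 𝓟 {w | 0 < w.re}]
      fun w => Real.exp (0 * ‖w‖ ^ (1 : ℝ)) :=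
    IsBigO.of_bound M <| eventually_inf_principal.2 <| Eventually.of_forall fun w hw => by
      simpa using hM _ (hmem w (le_of_lt hw))
  have hzero : EqOn (g ∘ halfPlaneToSQD c C) 0 {w | 0 ≤ w.re} :=
    PhragmenLindelof.eq_zero_on_right_half_plane_of_superexponential_decay hdiff
      ⟨1, one_lt_two, 0, hbdd⟩ (superpolynomialDecay_comp_halfPlaneToSQD c hC hflat)
      ⟨M, fun x => hM _ (hmem _ (by simp))⟩
  have hlim : Tendsto (fun x : ℝ => halfPlaneToSQD c C x) (𝓝[>] 0)
      (𝓝[≠] (halfPlaneToSQD c C 0)) := by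
    refine tendsto_nhdsWithin_iff.2 ⟨?_, ?_⟩
    · exact ((differentiableAt_halfPlaneToSQD c C le_rfl).continuousAt.comp
        Complex.continuous_ofReal.continuousAt).tendsto.mono_left nhdsWithin_le_nhds
    · filter_upwards [self_mem_nhdsWithin] with x (hx : 0 < x)
      rw [← Complex.ofReal_zero, halfPlaneToSQD_ofReal c C hx.le,
        halfPlaneToSQD_ofReal c C le_rfl, mem_compl_singleton_iff, Ne, Complex.ofReal_inj]
      have : √(0 + 1) ≤ √(x + 1) := Real.sqrt_le_sqrt (by linarith)
      nlinarith
  refine (hg.analyticOnNhd (isOpen_SQD c C)).eqOn_zero_of_preconnected_of_frequently_eq_zero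
    (isPreconnected_SQD c C) (hmem 0 le_rfl) (hlim.frequently (Eventually.frequently ?_))
  filter_upwards [self_mem_nhdsWithin] with x (hx : 0 < x)
  exact hzero (show 0 ≤ (x : ℂ).re from hx.le)

theorem eqOn_zero_of_eqOn_zero_SQD {T : Set ℂ} (hT : IsOpen T)
    (hleft : ∀ t ∈ T, ∀ s : ℝ, s ≤ 0 → t + s ∈ T) {g : ℂ → ℂ} (hg : AnalyticOnNhd ℂ g T)
    {c C : ℝ} (hzero : EqOn g 0 (SQD c C)) : EqOn g 0 T := by
  intro t₀ ht₀
  obtain ⟨r, hr, hball⟩ := Metric.isOpen_iff.1 hT t₀ ht₀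
  set V := Metric.ball t₀ r + Complex.ofRealCLM '' Iic 0
  have hVT : V ⊆ T := by
    rintro _ ⟨b, hb, _, ⟨s, hs, rfl⟩, rfl⟩
    exact hleft b (hball hb) s hs
  have hV : IsPreconnected V := ((convex_ball t₀ r).add
    ((convex_Iic 0).linear_image Complex.ofRealCLM.toLinearMap)).isPreconnected
  set R := max 0 (t₀.re - Real.log c + C * √|t₀.im| + 1)
  have ht₁V : t₀ + ((-R : ℝ) : ℂ) ∈ V :=
    ⟨t₀, Metric.mem_ball_self hr, _, ⟨-R, by simp [R], rfl⟩, rfl⟩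
  have ht₁ : t₀ + ((-R : ℝ) : ℂ) ∈ SQD c C := by
    simp only [SQD, mem_ofPred_eq, Complex.add_re, Complex.ofReal_re, Complex.add_im,
      Complex.ofReal_im, add_zero]
    linarith [le_max_right 0 (t₀.re - Real.log c + C * √|t₀.im| + 1)]
  have hev : g =ᶠ[𝓝 (t₀ + ((-R : ℝ) : ℂ))] 0 :=
    Filter.eventually_of_mem ((isOpen_SQD c C).mem_nhds ht₁) hzero
  exact (hg.mono hVT).eqOn_zero_of_preconnected_of_eventuallyEq_zero hV ht₁V hev
    ⟨t₀, Metric.mem_ball_self hr, 0, ⟨0, Set.mem_Iic.2 le_rfl, by simp⟩, add_zero t₀⟩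

lemma norm_sub_sub_sum_le {m : ℕ} {f : (Fin m → ℂ) → ℂ} {a : (Fin m → ℝ) → ℂ}
    {F : Finset (Fin m → ℝ)} {U : Set (Fin m → ℂ)} {δ ν : ℝ}
    (hrem : ∀ z ∈ U, eNorm z < δ → ‖f z - ∑ α ∈ F, a α * expMono α z‖ ≤ eNorm z ^ ν)
    {p : Fin m → ℂ} (hp : ∀ j, (p j).re = 0) {z : Fin m → ℂ} (hz : z ∈ U) (hzp : z + p ∈ U)
    (hzδ : eNorm z < δ) :
    ‖f (z + p) - f z - ∑ α ∈ F, a α * (expMono α p - 1) * expMono α z‖ ≤ 2 * eNorm z ^ ν := by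
  have h₁ := hrem z hz hzδ
  have h₂ := hrem (z + p) hzp (by rwa [eNorm_add_of_re_eq_zero hp])
  rw [eNorm_add_of_re_eq_zero hp] at h₂
  have hsplit : f (z + p) - f z - ∑ α ∈ F, a α * (expMono α p - 1) * expMono α z =
      (f (z + p) - ∑ α ∈ F, a α * expMono α (z + p)) - (f z - ∑ α ∈ F, a α * expMono α z) := by
    have hterm : ∀ α, a α * (expMono α p - 1) * expMono α z =
        a α * expMono α (z + p) - a α * expMono α z := fun α => by rw [expMono_add]; ring
    rw [Finset.sum_congr rfl fun α _ => hterm α, Finset.sum_sub_distrib]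
    ring
  rw [hsplit]
  linarith [norm_sub_le (f (z + p) - ∑ α ∈ F, a α * expMono α (z + p))
    (f z - ∑ α ∈ F, a α * expMono α z)]

lemma differentiableOn_apply_const_add_sub {m : ℕ} {c C : ℝ} {f : (Fin m → ℂ) → ℂ}
    (hf : DifferentiableOn ℂ f (QDom c C m)) (z w : Fin m → ℂ) :
    DifferentiableOn ℂ (fun t : ℂ => f ((fun _ => t) + w) - f ((fun _ => t) + z))
      {t | (fun _ => t) + z ∈ QDom c C m ∧ (fun _ => t) + w ∈ QDom c C m} := by
  intro t ht
  have hz : DifferentiableAt ℂ (fun t : ℂ => (fun _ : Fin m => t) + z) t := by fun_prop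
  have hw : DifferentiableAt ℂ (fun t : ℂ => (fun _ : Fin m => t) + w) t := by fun_prop
  exact (((hf.differentiableAt ((isOpen_QDom c C m).mem_nhds ht.2)).comp t hw).sub
    ((hf.differentiableAt ((isOpen_QDom c C m).mem_nhds ht.1)).comp t hz)).differentiableWithinAt

namespace HasAsymExp

variable {m : ℕ} {c C : ℝ} {f : (Fin m → ℂ) → ℂ} {a : (Fin m → ℝ) → ℂ}

lemma exists_remainder_le (ha : HasAsymExp c C f a) {ν : ℝ} (hν : 0 < ν) :
    ∃ c' C' : ℝ, 0 < C' ∧ QDom c' C' m ⊆ QDom c C m ∧ ∃ F : Finset (Fin m → ℝ),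
      (∀ α, α ∈ F ↔ a α ≠ 0 ∧ ∑ i, α i ≤ ν) ∧ ∃ δ > 0, ∀ z ∈ QDom c' C' m, eNorm z < δ →
        ‖f z - ∑ α ∈ F, a α * expMono α z‖ ≤ eNorm z ^ ν := by
  obtain ⟨c', C', -, hC', hsub, F, hF, hrem⟩ := ha.2 ν hν
  obtain ⟨δ, hδ, hδrem⟩ := hrem 1 one_pos
  exact ⟨c', C', hC', QDom_mono hsub m, F, hF, δ, hδ, fun z hz hzδ => by
    simpa using hδrem z hz hzδ⟩

lemma exists_norm_le (ha : HasAsymExp c C f a) :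
    ∃ c' C' : ℝ, 0 < C' ∧ QDom c' C' m ⊆ QDom c C m ∧ ∃ δ > 0, ∃ M : ℝ,
      ∀ z ∈ QDom c' C' m, eNorm z < δ → ‖f z‖ ≤ M := by
  obtain ⟨c', C', hC', hsub, F, hF, δ, hδ, hrem⟩ := ha.exists_remainder_le one_pos
  refine ⟨c', C', hC', hsub, min δ 1, lt_min hδ one_pos, δ + ∑ α ∈ F, ‖a α‖,
    fun z hz hzδ => ?_⟩
  have hre := re_lt_zero_of_eNorm_lt_one (hzδ.trans_le (min_le_right δ 1))
  have hsum : ‖∑ α ∈ F, a α * expMono α z‖ ≤ ∑ α ∈ F, ‖a α‖ :=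
    (norm_sum_le _ _).trans <| Finset.sum_le_sum fun α hα => by
      rw [norm_mul]
      exact mul_le_of_le_one_right (norm_nonneg _)
        (norm_expMono_le_one (ha.1.1 α ((hF α).1 hα).1) fun j => (hre j).le)
  have hfz := hrem z hz (hzδ.trans_le (min_le_left δ 1))
  rw [Real.rpow_one] at hfz
  have := norm_add_le (f z - ∑ α ∈ F, a α * expMono α z) (∑ α ∈ F, a α * expMono α z)
  rw [sub_add_cancel] at this
  linarith [hzδ.trans_le (min_le_left δ 1)]

lemma isBigO_sub_of_expMono_eq_one (ha : HasAsymExp c C f a) {p : Fin m → ℂ}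
    (hp : ∀ j, (p j).re = 0) (hexp : ∀ α, a α ≠ 0 → expMono α p = 1) (z₀ : Fin m → ℂ)
    {ν : ℝ} (hν : 0 < ν) :
    (fun x : ℝ => f ((fun _ => (x : ℂ)) + (z₀ + p)) - f ((fun _ => (x : ℂ)) + z₀)) =O[atBot]
      fun x => Real.exp (ν * x) := by
  obtain ⟨c', C', -, -, F, hF, δ, hδ, hrem⟩ := ha.exists_remainder_le hν
  have hsmall : ∀ᶠ x : ℝ in atBot, eNorm ((fun _ => (x : ℂ)) + z₀) < δ := by
    simp_rw [eNorm_const_add, Complex.ofReal_re]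
    exact (Real.tendsto_exp_atBot.mul_const (eNorm z₀)).eventually
      (gt_mem_nhds (by simpa using hδ))
  refine IsBigO.of_bound (2 * eNorm z₀ ^ ν) ?_
  filter_upwards [eventually_add_mem_QDom c' C' (u := fun x _ => x) (fun _ => tendsto_id) z₀,
    eventually_add_mem_QDom c' C' (u := fun x _ => x) (fun _ => tendsto_id) (z₀ + p), hsmall]
    with x hx hxp hxδ
  have hdiff := norm_sub_sub_sum_le hrem hp hx (by rwa [add_assoc]) hxδ
  have hcoeff : ∀ α ∈ F, a α * (expMono α p - 1) * expMono α ((fun _ => (x : ℂ)) + z₀) = 0 :=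
    fun α hα => by rw [hexp α ((hF α).1 hα).1, sub_self, mul_zero, zero_mul]
  rw [add_assoc, Finset.sum_eq_zero hcoeff, sub_zero, eNorm_const_add, Complex.ofReal_re,
    Real.mul_rpow (Real.exp_pos x).le (eNorm_nonneg z₀), ← Real.exp_mul] at hdiff
  rw [Real.norm_of_nonneg (Real.exp_pos _).le, mul_comm ν x]
  linarith

lemma exists_eqOn_zero_SQD (hf : DifferentiableOn ℂ f (QDom c C m)) (ha : HasAsymExp c C f a)
    {p : Fin m → ℂ} (hp : ∀ j, (p j).re = 0) (hexp : ∀ α, a α ≠ 0 → expMono α p = 1)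
    (z₀ : Fin m → ℂ) :
    ∃ c' C' : ℝ, EqOn (fun t : ℂ => f ((fun _ => t) + (z₀ + p)) - f ((fun _ => t) + z₀)) 0
      (SQD c' C') := by
  obtain ⟨c₁, C₁, hC₁, hsub, δ, hδ, M, hM⟩ := ha.exists_norm_le
  obtain ⟨L, hL⟩ := ((eventually_forall_SQD_const_add_mem_QDom c₁ hC₁.le z₀ hδ).and
    (eventually_forall_SQD_const_add_mem_QDom c₁ hC₁.le (z₀ + p) hδ)).exists
  refine ⟨Real.exp L, C₁, eqOn_zero_of_isBigO_exp hC₁.le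
    ((differentiableOn_apply_const_add_sub hf z₀ (z₀ + p)).mono fun t ht =>
      ⟨hsub (hL.1 t ht).1, hsub (hL.2 t ht).1⟩) (M := 2 * M) (fun t ht => ?_)
    fun ν hν => ha.isBigO_sub_of_expMono_eq_one hp hexp z₀ hν⟩
  exact (norm_sub_le _ _).trans
    (by linarith [hM _ (hL.2 t ht).1 (hL.2 t ht).2, hM _ (hL.1 t ht).1 (hL.1 t ht).2])

theorem apply_add_eq_of_expMono_eq_one (hf : DifferentiableOn ℂ f (QDom c C m))
    (ha : HasAsymExp c C f a) {p : Fin m → ℂ} (hp : ∀ j, (p j).re = 0)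
    (hexp : ∀ α, a α ≠ 0 → expMono α p = 1) {z₀ : Fin m → ℂ} (hz₀ : z₀ ∈ QDom c C m)
    (hz₀p : z₀ + p ∈ QDom c C m) : f (z₀ + p) = f z₀ := by
  set T := {t : ℂ | (fun _ => t) + z₀ ∈ QDom c C m ∧ (fun _ => t) + (z₀ + p) ∈ QDom c C m}
  have hT : IsOpen T := ((isOpen_QDom c C m).preimage (by fun_prop)).inter
    ((isOpen_QDom c C m).preimage (by fun_prop))
  have hleft : ∀ t ∈ T, ∀ s : ℝ, s ≤ 0 → t + s ∈ T := fun t ht s hs =>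
    ⟨const_add_ofReal_add_mem_QDom ht.1 hs, const_add_ofReal_add_mem_QDom ht.2 hs⟩
  have hzero_add : ∀ z : Fin m → ℂ, (fun _ => (0 : ℂ)) + z = z := fun z => zero_add z
  obtain ⟨c', C', hzero⟩ := ha.exists_eqOn_zero_SQD hf hp hexp z₀
  have h0 := eqOn_zero_of_eqOn_zero_SQD hT hleft
    ((differentiableOn_apply_const_add_sub hf z₀ (z₀ + p)).analyticOnNhd hT) hzero
    (show (0 : ℂ) ∈ T from ⟨(hzero_add z₀).symm ▸ hz₀, (hzero_add (z₀ + p)).symm ▸ hz₀p⟩)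
  simpa [hzero_add, sub_eq_zero] using h0

theorem expMono_eq_one_of_apply_add_eq (ha : HasAsymExp c C f a) {p : Fin m → ℂ}
    (hp : ∀ j, (p j).re = 0) (hper : ∀ z ∈ QDom c C m, z + p ∈ QDom c C m → f (z + p) = f z)
    {α₀ : Fin m → ℝ} (hα₀ : a α₀ ≠ 0) : expMono α₀ p = 1 := by
  set ν := ∑ j, α₀ j + 1
  have hα₀ν : ∑ j, α₀ j = ν - 1 := by ring
  have hν : 1 ≤ ν := by
    linarith [Finset.sum_nonneg fun j (_ : j ∈ Finset.univ) => ha.1.1 α₀ hα₀ j]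
  obtain ⟨c', C', -, hsub, F, hF, δ, hδ, hrem⟩ := ha.exists_remainder_le (by linarith : 0 < ν)
  set s := 1 - 1 / (2 * ν)
  have hs : s * ν = ν - 1 / 2 := by
    simp only [s]
    field_simp
  have hs0 : 0 < s := pos_of_mul_pos_left (by linarith) (by linarith : (0 : ℝ) ≤ ν)
  obtain ⟨w, hw, hinj⟩ := exists_mem_Ioo_injOn_dotProduct F (show s < 1 by
    have : 0 < 1 / (2 * ν) := by positivity
    linarith)
  set z : ℝ → Fin m → ℂ := fun t j => ((w j * t : ℝ) : ℂ)
  have hu : ∀ j, Tendsto (fun t => w j * t) atBot atBot :=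
    fun j => tendsto_id.const_mul_atBot (hs0.trans (hw j).1)
  have hsmall : ∀ᶠ t in atBot, t ≤ 0 ∧ eNorm (z t) < δ := by
    have hlim : Tendsto (fun t => √m * Real.exp (s * t)) atBot (𝓝 0) := by
      simpa using (Real.tendsto_exp_atBot.comp (tendsto_id.const_mul_atBot hs0)).const_mul √m
    filter_upwards [eventually_le_atBot 0, hlim.eventually (gt_mem_nhds hδ)] with t ht htδ
    exact ⟨ht, (eNorm_ofReal_mul_le (fun j => (hw j).1.le) ht).trans_lt htδ⟩
  have hbig : (fun t : ℝ => ∑ α ∈ F, a α * (expMono α p - 1) * Real.exp (t * α ⬝ᵥ w)) =O[atBot]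
      fun t => Real.exp (t * (s * ν)) := by
    refine IsBigO.of_bound (2 * √m ^ ν) ?_
    filter_upwards [(eventually_add_mem_QDom c' C' hu 0).mono fun t ht => by rwa [add_zero] at ht,
      eventually_add_mem_QDom c' C' hu p, hsmall] with t hz hzp ⟨ht, htδ⟩
    have hdiff := norm_sub_sub_sum_le hrem hp hz hzp htδ
    rw [hper _ (hsub hz) (hsub hzp), sub_self, zero_sub, norm_neg] at hdiff
    simp only [expMono_ofReal_mul] at hdiff
    calc _ ≤ 2 * eNorm (z t) ^ ν := hdiff
      _ ≤ 2 * (√m * Real.exp (s * t)) ^ ν := by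
        gcongr
        · exact eNorm_nonneg _
        · exact eNorm_ofReal_mul_le (fun j => (hw j).1.le) ht
      _ = 2 * √m ^ ν * ‖Real.exp (t * (s * ν))‖ := by
        rw [Real.mul_rpow (Real.sqrt_nonneg _) (Real.exp_pos _).le, ← Real.exp_mul,
          Real.norm_of_nonneg (Real.exp_pos _).le]
        ring_nf
  have hlt : α₀ ⬝ᵥ w < s * ν := by
    have : α₀ ⬝ᵥ w ≤ ∑ j, α₀ j := Finset.sum_le_sum fun j _ =>
      mul_le_of_le_one_right (ha.1.1 α₀ hα₀ j) (hw j).2.le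
    linarith
  have hkill := eq_zero_of_isBigO_sum_exp hinj hbig ((hF α₀).2 ⟨hα₀, by linarith⟩) hlt
  exact sub_eq_zero.1 ((mul_eq_zero.1 hkill).resolve_left hα₀)

end HasAsymExp

theorem stmt4_general (m : ℕ) (c C : ℝ)
    (f : (Fin m → ℂ) → ℂ) (hf : DifferentiableOn ℂ f (QDom c C m))
    (a : (Fin m → ℝ) → ℂ) (ha : HasAsymExp c C f a) (k : ℕ) :
    (∀ α, a α ≠ 0 → ∀ i : Fin m, k ≤ (i : ℕ) → ∃ q : ℕ, α i = q) ↔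
    (∀ i : Fin m, k ≤ (i : ℕ) → ∀ z ∈ QDom c C m,
      z + Pi.single i (((2 * Real.pi : ℝ) : ℂ) * Complex.I) ∈ QDom c C m →
      f (z + Pi.single i (((2 * Real.pi : ℝ) : ℂ) * Complex.I)) = f z) := by
  have hre : ∀ i j : Fin m,
      (Pi.single (M := fun _ => ℂ) i (((2 * Real.pi : ℝ) : ℂ) * Complex.I) j).re = 0 :=
    fun i j => by by_cases h : j = i <;> simp [h]
  constructor
  · intro hnat i hi z hz hzp
    refine ha.apply_add_eq_of_expMono_eq_one hf (hre i) (fun α hα => ?_) hz hzp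
    rw [expMono_single, ← exists_nat_eq_iff_exp_eq_one (ha.1.1 α hα i)]
    exact hnat α hα i hi
  · intro hper α hα i hi
    rw [exists_nat_eq_iff_exp_eq_one (ha.1.1 α hα i), ← expMono_single]
    exact ha.expMono_eq_one_of_apply_add_eq (hre i) (hper i hi) hα

/-- Characterization of the mixed classes: the exponents `αᵢ` for
`i ∈ {k+1,…,m}` in the expansion of `f` are all natural numbers if and only if `f` is
invariant under the monodromy translations `zᵢ ↦ zᵢ + 2π√−1` in those variables. -/
theorem stmt4 (m : ℕ) (c C : ℝ) (hc : 0 < c) (hC : 0 < C)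
    (f : (Fin m → ℂ) → ℂ) (hf : DifferentiableOn ℂ f (QDom c C m))
    (a : (Fin m → ℝ) → ℂ) (ha : HasAsymExp c C f a) (k : ℕ) (hk : k ≤ m) :
    (∀ α, a α ≠ 0 → ∀ i : Fin m, k ≤ (i : ℕ) → ∃ q : ℕ, α i = q) ↔
    (∀ i : Fin m, k ≤ (i : ℕ) → ∀ z ∈ QDom c C m,
      z + Pi.single i (((2 * Real.pi : ℝ) : ℂ) * Complex.I) ∈ QDom c C m →
      f (z + Pi.single i (((2 * Real.pi : ℝ) : ℂ) * Complex.I)) = f z) :=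
  stmt4_general m c C f hf a ha k
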